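/- Let ρ be a positive semidefinite operator on ℂ²⊗H_Y with block form [[A,B],[B†,D]] as above I, and suppose there exist |φ⟩ ∈ supp A, |β⟩ ∈ Ker A with v := ⟨φ|B|β⟩ ≠ 0. Then the partial transpose of ρ with respect to any orthonormal basis of H_Y containing |φ⟩ and |β⟩ is not positive semidefinite: its principal 2×2 submatrix on span{|α₀,β⟩, |α₁,φ⟩} has the form [[0, v],[v̄, *]] with determinant −|v|² < 0. -/

import Mathlib

open Matrix ComplexOrder

/-! A positive semidefinite matrix with a zero diagonal entry `M i i = 0` and a nonzero
entry `M i j` in the same row has a principal `2 × 2` minor `-‖M i j‖²`, which is negative.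
Taking `M` to be the partial transpose of `ρ`, `i = (α₀, β)` and `j = (α₁, φ)`, the entry
`M i i = ⟨β|A|β⟩` vanishes since `β ∈ Ker A`, while `M i j = ⟨φ|B|β⟩ = v ≠ 0`. -/

/-- Partial transpose on the trusted factor H_Y = ℂⁿ, entrywise in the chosen
orthonormal basis. -/
def ptY {n : ℕ} (M : Matrix (Fin 2 × Fin n) (Fin 2 × Fin n) ℂ) :
    Matrix (Fin 2 × Fin n) (Fin 2 × Fin n) ℂ :=
  Matrix.of fun p q => M (p.1, q.2) (q.1, p.2)

theorem Matrix.PosSemidef.principal_minor_nonneg {m 𝕜 : Type*} [Fintype m] [RCLike 𝕜]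
    {M : Matrix m m 𝕜} (hM : M.PosSemidef) (i j : m) :
    0 ≤ M i i * M j j - M i j * M j i := by
  classical
  have := (hM.submatrix ![i, j]).det_nonneg
  rwa [det_fin_two] at this

theorem ptY_apply_one_zero_eq_star {n : ℕ} {ρ : Matrix (Fin 2 × Fin n) (Fin 2 × Fin n) ℂ}
    (hρ : ρ.IsHermitian) (p q : Fin n) :
    ptY ρ (1, p) (0, q) = star (ptY ρ (0, q) (1, p)) :=
  (hρ.apply (1, q) (0, p)).symm

theorem Matrix.not_posSemidef_of_diag_eq_zero {m : Type*} [Fintype m] {M : Matrix m m ℂ}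
    {i j : m} (hii : M i i = 0) (hij : M i j ≠ 0) : ¬ M.PosSemidef := by
  intro hM
  have hminor := hM.principal_minor_nonneg i j
  rw [hii, ← hM.isHermitian.apply j i, zero_mul, zero_sub, Complex.star_def,
    Complex.mul_conj', ← Complex.ofReal_pow, ← Complex.ofReal_neg, Complex.zero_le_real] at hminor
  have : 0 < ‖M i j‖ ^ 2 := by positivity
  linarith

theorem stmt17 {n : ℕ} (ρ : Matrix (Fin 2 × Fin n) (Fin 2 × Fin n) ℂ)
    (hρ : ρ.PosSemidef)
    (A B : Matrix (Fin n) (Fin n) ℂ)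
    (hA : ∀ j k, A j k = ρ (0, j) (0, k))
    (hB : ∀ j k, B j k = ρ (0, j) (1, k))
    (p q : Fin n)
    (hker : A *ᵥ Pi.single q 1 = 0)
    (hv : B p q ≠ 0) :
    ptY ρ (0, q) (0, q) = 0 ∧
    ptY ρ (0, q) (1, p) = B p q ∧
    ptY ρ (0, q) (0, q) * ptY ρ (1, p) (1, p)
      - ptY ρ (0, q) (1, p) * ptY ρ (1, p) (0, q)
      = -((‖B p q‖ ^ 2 : ℝ) : ℂ) ∧
    ¬ (ptY ρ).PosSemidef := by
  have h00 : ptY ρ (0, q) (0, q) = 0 := by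
    simpa [ptY, mulVec_single_one, hA] using congrFun hker q
  have h01 : ptY ρ (0, q) (1, p) = B p q := (hB p q).symm
  have h10 : ptY ρ (1, p) (0, q) = star (ptY ρ (0, q) (1, p)) :=
    ptY_apply_one_zero_eq_star hρ.isHermitian p q
  refine ⟨h00, h01, ?_, not_posSemidef_of_diag_eq_zero h00 (h01 ▸ hv)⟩
  rw [h10, h00, h01, zero_mul, zero_sub, Complex.star_def, Complex.mul_conj', Complex.ofReal_pow]
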